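/- arXiv:1101.2587 — 2 statements merged into one kernel-verified Lean document; each statement's English description precedes it below -/
import Mathlib

section
/- Let n, m be positive integers with m < n. Let f : ℝᵐ → ℝⁿ be a C¹ embedding, let x₀ ∈ ℝᵐ, set z₀ = f(x₀), and assume the derivative f'(x₀) has rank m. Let P_T denote the orthogonal projection of ℝⁿ onto the linear subspace f'(x₀)ℝᵐ. Then for every ε > 0 there exists δ > 0 such that |P_T(y − z)| ≥ (1 − ε)|y − z| for all y, z ∈ f(ℝᵐ) ∩ B(z₀, δ). -/
open MeasureTheory Metric Set
open scoped ENNReal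

/-- The radial projection from `x`, mapping `y ≠ x` to `(y - x)/‖y - x‖ ∈ S^{n-1}`. -/
noncomputable def radialProj {n : ℕ} (x y : EuclideanSpace ℝ (Fin n)) : EuclideanSpace ℝ (Fin n) :=
  ‖y - x‖⁻¹ • (y - x)

/-- A `C¹` embedding: continuously differentiable and a homeomorphism onto its image. -/
def IsC1Embedding {m n : ℕ} (f : EuclideanSpace ℝ (Fin m) → EuclideanSpace ℝ (Fin n)) : Prop :=
  ContDiff ℝ 1 f ∧ Topology.IsEmbedding f

/-- `T` is an affine `k`-plane: a translate of a `k`-dimensional linear subspace. -/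
def IsAffinePlane {n : ℕ} (k : ℕ) (T : Set (EuclideanSpace ℝ (Fin n))) : Prop :=
  ∃ (W : Submodule ℝ (EuclideanSpace ℝ (Fin n))) (v : EuclideanSpace ℝ (Fin n)),
    Module.finrank ℝ W = k ∧ T = (fun w => v + w) '' (W : Set (EuclideanSpace ℝ (Fin n)))

/-- `E` is `m`-rectifiable: `ℋᵐ`-measurable, of positive `ℋᵐ` measure, and covered up to an
`ℋᵐ`-null set by countably many `C¹` embeddings of `ℝᵐ` into `ℝⁿ`. -/
def IsRectifiableSet (m n : ℕ) (E : Set (EuclideanSpace ℝ (Fin n))) : Prop :=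
  NullMeasurableSet E (μH[(m : ℝ)]) ∧ 0 < μH[(m : ℝ)] E ∧
  ∃ f : ℕ → (EuclideanSpace ℝ (Fin m) → EuclideanSpace ℝ (Fin n)),
    (∀ i, IsC1Embedding (f i)) ∧ μH[(m : ℝ)] (E \ ⋃ i, Set.range (f i)) = 0

open scoped NNReal

/-!
A `C¹` map is strictly differentiable at `x₀`: for every `c > 0` there is a neighbourhood `s`
of `x₀` on which `‖f a - f b - L (a - b)‖ ≤ c ‖a - b‖`, where `L = f'(x₀)`. Since `L` has full
rank it is antilipschitz, say with constant `N`, so `f` is antilipschitz on `s` with constant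
`(N⁻¹ - c)⁻¹`. Hence `f a - f b` lies within `c (N⁻¹ - c)⁻¹ ‖f a - f b‖` of the vector
`L (a - b)` of the tangent space, and the orthogonal projection onto the tangent space shortens
it by at most that amount; `c` is chosen so that this factor is `ε`. Because `f` is an embedding,
the points of `f(ℝᵐ)` close to `f x₀` are images of points of `s`.
-/

theorem LinearMap.ker_eq_bot_of_finrank_range_eq {K V W : Type*} [DivisionRing K]
    [AddCommGroup V] [Module K V] [AddCommGroup W] [Module K W] [FiniteDimensional K V]
    (f : V →ₗ[K] W) (h : Module.finrank K (LinearMap.range f) = Module.finrank K V) :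
    LinearMap.ker f = ⊥ := by
  have := f.finrank_range_add_finrank_ker
  exact Submodule.finrank_eq_zero.mp (by omega)

theorem Topology.IsInducing.exists_preimage_ball_subset {X Y : Type*} [TopologicalSpace X]
    [PseudoMetricSpace Y] {f : X → Y} (hf : Topology.IsInducing f) {x : X} {s : Set X}
    (hs : s ∈ nhds x) : ∃ δ > 0, f ⁻¹' ball (f x) δ ⊆ s :=
  (hf.basis_nhds nhds_basis_ball).mem_iff.mp hs

theorem NNReal.exists_pos_lt_mul_inv_sub_eq {a ε : ℝ≥0} (ha : 0 < a) (hε : 0 < ε) :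
    ∃ c : ℝ≥0, 0 < c ∧ c < a ∧ c * (a - c)⁻¹ = ε := by
  have hlt : a * ε / (1 + ε) < a := by
    rw [mul_div_assoc]
    exact mul_lt_of_lt_one_right ha ((div_lt_one (by positivity)).mpr (lt_one_add ε))
  refine ⟨a * ε / (1 + ε), by positivity, hlt, ?_⟩
  apply NNReal.eq
  push_cast [NNReal.coe_sub hlt.le]
  field_simp
  ring

namespace Submodule

variable {E : Type*} [NormedAddCommGroup E] [InnerProductSpace ℝ E] (K : Submodule ℝ E)
  [K.HasOrthogonalProjection]

theorem norm_sub_starProjection_le {t : E} (ht : t ∈ K) (w : E) :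
    ‖w - K.starProjection w‖ ≤ ‖w - t‖ := by
  rw [starProjection_minimal]
  exact ciInf_le ⟨0, forall_mem_range.mpr fun _ => norm_nonneg _⟩ (⟨t, ht⟩ : K)

theorem one_sub_mul_norm_le_norm_starProjection {t w : E} {ε : ℝ} (ht : t ∈ K)
    (hwt : ‖w - t‖ ≤ ε * ‖w‖) : (1 - ε) * ‖w‖ ≤ ‖K.starProjection w‖ := by
  have := K.norm_sub_starProjection_le ht w
  have := norm_sub_norm_le w (K.starProjection w)
  linarith

end Submodule

namespace ApproximatesLinearOn

variable {E F : Type*} [NormedAddCommGroup E] [NormedSpace ℝ E] [NormedAddCommGroup F]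
  {s : Set E} {c N : ℝ≥0}

theorem antilipschitz_of_antilipschitzWith [NormedSpace ℝ F] {f : E → F} {L : E →L[ℝ] F}
    (hf : ApproximatesLinearOn f L s c) (hL : AntilipschitzWith N L) (hc : c < N⁻¹) :
    AntilipschitzWith (N⁻¹ - c)⁻¹ (s.domRestrict f) := by
  convert! (hL.domRestrict s).add_lipschitzWith hf.lipschitz_sub hc
  simp [domRestrict]

theorem one_sub_mul_norm_le_norm_starProjection_range [InnerProductSpace ℝ F] {f : E → F}
    {L : E →L[ℝ] F} [(LinearMap.range (L : E →ₗ[ℝ] F)).HasOrthogonalProjection]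
    (hf : ApproximatesLinearOn f L s c) (hL : AntilipschitzWith N L) (hc : c < N⁻¹)
    {x y : E} (hx : x ∈ s) (hy : y ∈ s) :
    (1 - ((c * (N⁻¹ - c)⁻¹ : ℝ≥0) : ℝ)) * ‖f x - f y‖ ≤
      ‖(LinearMap.range (L : E →ₗ[ℝ] F)).starProjection (f x - f y)‖ := by
  refine Submodule.one_sub_mul_norm_le_norm_starProjection _
    (LinearMap.mem_range_self _ (x - y)) ?_
  have hxy : ‖x - y‖ ≤ (N⁻¹ - c)⁻¹ * ‖f x - f y‖ := by
    simpa [Subtype.dist_eq, dist_eq_norm] using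
      (hf.antilipschitz_of_antilipschitzWith hL hc).le_mul_dist ⟨x, hx⟩ ⟨y, hy⟩
  calc ‖f x - f y - L (x - y)‖ ≤ c * ‖x - y‖ := hf x hx y hy
    _ ≤ c * ((N⁻¹ - c)⁻¹ * ‖f x - f y‖) := by gcongr
    _ = _ := by push_cast; ring

end ApproximatesLinearOn

theorem stmt3_general {n m : ℕ}
    (f : EuclideanSpace ℝ (Fin m) → EuclideanSpace ℝ (Fin n)) (hf : IsC1Embedding f)
    (x₀ : EuclideanSpace ℝ (Fin m))
    (hrank : Module.finrank ℝ (LinearMap.range (fderiv ℝ f x₀).toLinearMap) = m) :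
    ∀ ε > (0 : ℝ), ∃ δ > (0 : ℝ),
      ∀ y ∈ Set.range f ∩ ball (f x₀) δ, ∀ z ∈ Set.range f ∩ ball (f x₀) δ,
        (1 - ε) * ‖y - z‖ ≤
          ‖(Submodule.orthogonalProjectionOnto (LinearMap.range (fderiv ℝ f x₀).toLinearMap) (y - z) :
            EuclideanSpace ℝ (Fin n))‖ := by
  intro ε hε
  set L := fderiv ℝ f x₀
  obtain ⟨N, hN, hL⟩ := L.toLinearMap.exists_antilipschitzWith
    (L.toLinearMap.ker_eq_bot_of_finrank_range_eq (by rw [hrank, finrank_euclideanSpace_fin]))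
  obtain ⟨c, hc, hcN, hcε⟩ :=
    NNReal.exists_pos_lt_mul_inv_sub_eq (inv_pos.mpr hN) (Real.toNNReal_pos.mpr hε)
  obtain ⟨s, hs, hfs⟩ :=
    (hf.1.contDiffAt.hasStrictFDerivAt one_ne_zero).approximates_deriv_on_nhds (Or.inr hc)
  obtain ⟨δ, hδ, hδs⟩ := hf.2.isInducing.exists_preimage_ball_subset hs
  refine ⟨δ, hδ, ?_⟩
  rintro _ ⟨⟨a, rfl⟩, ha⟩ _ ⟨⟨b, rfl⟩, hb⟩
  have := hfs.one_sub_mul_norm_le_norm_starProjection_range hL hcN (hδs ha) (hδs hb)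
  rwa [hcε, Real.coe_toNNReal _ hε.le] at this

/-- If `f : ℝᵐ → ℝⁿ` is a `C¹` embedding whose derivative at `x₀` has rank `m`, then for every
`ε > 0` there is `δ > 0` with `‖P_T(y − z)‖ ≥ (1 − ε)‖y − z‖` for all
`y, z ∈ f(ℝᵐ) ∩ B(f(x₀), δ)`, where `P_T` is the orthogonal projection onto `f'(x₀)ℝᵐ`. -/
theorem stmt3 {n m : ℕ} (hm : 0 < m) (hmn : m < n)
    (f : EuclideanSpace ℝ (Fin m) → EuclideanSpace ℝ (Fin n)) (hf : IsC1Embedding f)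
    (x₀ : EuclideanSpace ℝ (Fin m))
    (hrank : Module.finrank ℝ (LinearMap.range (fderiv ℝ f x₀).toLinearMap) = m) :
    ∀ ε > (0 : ℝ), ∃ δ > (0 : ℝ),
      ∀ y ∈ Set.range f ∩ ball (f x₀) δ, ∀ z ∈ Set.range f ∩ ball (f x₀) δ,
        (1 - ε) * ‖y - z‖ ≤
          ‖(Submodule.orthogonalProjectionOnto (LinearMap.range (fderiv ℝ f x₀).toLinearMap) (y - z) :
            EuclideanSpace ℝ (Fin n))‖ :=
  stmt3_general f hf x₀ hrank
end

section
/- Let n, m be positive integers with m < n. Let f : ℝᵐ → ℝⁿ be a C¹ embedding, let x₀ ∈ ℝᵐ, set z₀ = f(x₀), and assume f'(x₀) has rank m. Let T = z₀ + f'(x₀)ℝᵐ and let x ∈ ℝⁿ with x ∉ T. Then there exist δ > 0 and c > 0 such that for all y, z ∈ f(ℝᵐ) ∩ B(z₀, δ), the angle γ(y, z) between the vectors y − x and z − x satisfies γ(y, z) ≥ c|y − z|. -/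
open MeasureTheory Metric Set
open scoped ENNReal

/-!
Let `ρ w = ‖w - x‖⁻¹ • (w - x)` be the radial projection from `x` onto the unit sphere. The angle
`γ(y, z)` is at least the chord `‖ρ y - ρ z‖`. The derivative of `ρ` at `f x₀` only kills the line
through `f x₀ - x`, which meets `f'(x₀)ℝᵐ` only at `0` because `x ∉ T`; so `ρ ∘ f` has an injective
strict derivative at `x₀` and is antilipschitz near `x₀`. Since `f` is locally Lipschitz and an
embedding, for `y = f a`, `z = f b` near `f x₀` we get `‖y - z‖ ≲ ‖a - b‖ ≲ ‖ρ y - ρ z‖ ≤ γ(y, z)`.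
-/

open InnerProductGeometry Topology LinearMap

theorem HasStrictFDerivAt.exists_mem_nhds_antilipschitzWith {𝕜 E F : Type*}
    [NontriviallyNormedField 𝕜] [CompleteSpace 𝕜] [NormedAddCommGroup E] [NormedSpace 𝕜 E]
    [FiniteDimensional 𝕜 E] [NormedAddCommGroup F] [NormedSpace 𝕜 F]
    {f : E → F} {f' : E →L[𝕜] F} {a : E} (hf : HasStrictFDerivAt f f' a)
    (hf' : ker (f' : E →ₗ[𝕜] F) = ⊥) :
    ∃ K, ∃ s ∈ 𝓝 a, AntilipschitzWith K (s.domRestrict f) := by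
  obtain ⟨K, hK, hf'K⟩ := (f' : E →ₗ[𝕜] F).exists_antilipschitzWith hf'
  obtain ⟨s, hs, hfs⟩ := hf.approximates_deriv_on_nhds (c := K⁻¹ / 2) (.inr (by positivity))
  exact ⟨_, s, hs, (hf'K.domRestrict s).add_sub_lipschitzWith hfs.lipschitz_sub
    (half_lt_self (by positivity))⟩

theorem LinearMap.ker_eq_bot_of_finrank_range_eq_s4 {K V₁ V₂ : Type*} [DivisionRing K]
    [AddCommGroup V₁] [Module K V₁] [FiniteDimensional K V₁] [AddCommGroup V₂] [Module K V₂]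
    {D : V₁ →ₗ[K] V₂} (hD : Module.finrank K (range D) = Module.finrank K V₁) : ker D = ⊥ := by
  have := finrank_range_add_finrank_ker D
  exact Submodule.finrank_eq_zero.1 (by omega)

theorem LinearMap.ker_comp_eq_bot_of_ker_le_span {K V₁ V₂ V₃ : Type*} [Field K]
    [AddCommGroup V₁] [Module K V₁] [AddCommGroup V₂] [Module K V₂] [AddCommGroup V₃] [Module K V₃]
    {D : V₁ →ₗ[K] V₂} {L : V₂ →ₗ[K] V₃} {e : V₂} (hD : ker D = ⊥) (hL : ker L ≤ K ∙ e)
    (he : e ∉ range D) : ker (L ∘ₗ D) = ⊥ := by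
  have he0 : e ≠ 0 := by rintro rfl; exact he (zero_mem _)
  rw [ker_comp, ← le_bot_iff]
  intro v hv
  have hDv : D v ∈ range D ⊓ (K ∙ e) := ⟨mem_range_self D v, hL hv⟩
  rw [((Submodule.disjoint_span_singleton' he0).2 he).eq_bot, Submodule.mem_bot] at hDv
  rw [← hD]
  exact hDv

section InnerProductSpace

variable {V : Type*} [NormedAddCommGroup V] [InnerProductSpace ℝ V]

theorem InnerProductGeometry.norm_inv_smul_sub_inv_smul_le_angle (u v : V) :
    ‖‖u‖⁻¹ • u - ‖v‖⁻¹ • v‖ ≤ angle u v := by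
  have hunit (w : V) : ‖‖w‖⁻¹ • w‖ ≤ 1 :=
    mem_closedBall_zero_iff.1 (inv_norm_smul_mem_unitClosedBall w)
  have hpi : 1 ≤ Real.pi / 2 := by linarith [Real.pi_gt_three]
  rcases eq_or_ne u 0 with rfl | hu
  · simpa using (hunit v).trans hpi
  rcases eq_or_ne v 0 with rfl | hv
  · simpa using (hunit u).trans hpi
  have hsq : ‖‖u‖⁻¹ • u - ‖v‖⁻¹ • v‖ ^ 2 = 2 - 2 * Real.cos (angle u v) := by
    rw [cos_angle, norm_sub_sq_real, real_inner_smul_left, real_inner_smul_right]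
    simp only [norm_smul, norm_inv, norm_norm, ne_eq, norm_eq_zero, hu, hv, not_false_eq_true,
      inv_mul_cancel₀, one_pow]
    field_simp
    ring
  rw [← pow_le_pow_iff_left₀ (norm_nonneg _) (angle_nonneg u v) two_ne_zero, hsq]
  linarith [Real.one_sub_sq_div_two_le_cos (x := angle u v)]

theorem contDiffAt_radialProjection {x p : V} (hp : p ≠ x) {n : WithTop ℕ∞} :
    ContDiffAt ℝ n (fun w => ‖w - x‖⁻¹ • (w - x)) p := by
  have hsub : ContDiffAt ℝ n (fun w => w - x) p := contDiffAt_id.sub contDiffAt_const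
  exact ((hsub.norm ℝ (sub_ne_zero.2 hp)).inv (norm_ne_zero_iff.2 (sub_ne_zero.2 hp))).smul hsub

theorem ker_fderiv_radialProjection_le {x p : V} (hp : p ≠ x) :
    ker (fderiv ℝ (fun w => ‖w - x‖⁻¹ • (w - x)) p : V →ₗ[ℝ] V) ≤ ℝ ∙ (p - x) := by
  set ρ : V → V := fun w => ‖w - x‖⁻¹ • (w - x)
  have hN : HasFDerivAt (fun w => ‖w - x‖) (fderiv ℝ (fun w => ‖w - x‖) p) p :=
    ((contDiffAt_id.sub contDiffAt_const).norm ℝ (sub_ne_zero.2 hp)).differentiableAt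
      one_ne_zero |>.hasFDerivAt
  have hρ : HasFDerivAt ρ (fderiv ℝ ρ p) p :=
    ((contDiffAt_radialProjection hp (n := 1)).differentiableAt one_ne_zero).hasFDerivAt
  have hNρ : ((fun w => ‖w - x‖) • ρ) = fun w => w - x := by
    funext w
    rcases eq_or_ne w x with rfl | hw
    · simp
    · exact smul_inv_smul₀ (norm_ne_zero_iff.2 (sub_ne_zero.2 hw)) _
  have hderiv := (hN.smul hρ).unique (hNρ ▸ (hasFDerivAt_id p).sub_const x)
  intro h hh
  have hdecomp : ‖p - x‖ • fderiv ℝ ρ p h + fderiv ℝ (fun w => ‖w - x‖) p h • ρ p = h :=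
    DFunLike.congr_fun hderiv h
  rw [show fderiv ℝ ρ p h = 0 from hh, smul_zero, zero_add] at hdecomp
  rw [← hdecomp, smul_smul]
  exact Submodule.smul_mem _ _ (Submodule.mem_span_singleton_self _)

theorem ContDiffAt.exists_mem_nhds_antilipschitzWith_radialProjection {E : Type*}
    [NormedAddCommGroup E] [NormedSpace ℝ E] [FiniteDimensional ℝ E] {f : E → V} {a : E} {x : V}
    (hf : ContDiffAt ℝ 1 f a) (hker : ker (fderiv ℝ f a : E →ₗ[ℝ] V) = ⊥)
    (hx : f a - x ∉ LinearMap.range (fderiv ℝ f a : E →ₗ[ℝ] V)) :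
    ∃ K, ∃ s ∈ 𝓝 a, AntilipschitzWith K (s.domRestrict fun b => ‖f b - x‖⁻¹ • (f b - x)) := by
  have hfa : f a ≠ x := fun h => hx (by rw [h, sub_self]; exact zero_mem _)
  have hρf := ((contDiffAt_radialProjection hfa).hasStrictFDerivAt one_ne_zero).comp a
    (hf.hasStrictFDerivAt one_ne_zero)
  exact hρf.exists_mem_nhds_antilipschitzWith
    (ker_comp_eq_bot_of_ker_le_span hker (ker_fderiv_radialProjection_le hfa) hx)

end InnerProductSpace

theorem stmt4_general {n m : ℕ}
    (f : EuclideanSpace ℝ (Fin m) → EuclideanSpace ℝ (Fin n)) (hf : IsC1Embedding f)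
    (x₀ : EuclideanSpace ℝ (Fin m))
    (hrank : Module.finrank ℝ (LinearMap.range (fderiv ℝ f x₀ : EuclideanSpace ℝ (Fin m) →ₗ[ℝ] EuclideanSpace ℝ (Fin n))) = m)
    (x : EuclideanSpace ℝ (Fin n))
    (hx : x ∉ (fun w => f x₀ + w) ''
      ((LinearMap.range (fderiv ℝ f x₀ : EuclideanSpace ℝ (Fin m) →ₗ[ℝ] EuclideanSpace ℝ (Fin n)) : Submodule ℝ (EuclideanSpace ℝ (Fin n))) :
        Set (EuclideanSpace ℝ (Fin n)))) :
    ∃ δ > (0 : ℝ), ∃ c > (0 : ℝ),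
      ∀ y ∈ Set.range f ∩ ball (f x₀) δ, ∀ z ∈ Set.range f ∩ ball (f x₀) δ,
        c * ‖y - z‖ ≤ InnerProductGeometry.angle (y - x) (z - x) := by
  obtain ⟨hC1, hemb⟩ := hf
  have hC1x₀ : ContDiffAt ℝ 1 f x₀ := hC1.contDiffAt
  have hD := ker_eq_bot_of_finrank_range_eq_s4 (hrank.trans (finrank_euclideanSpace_fin).symm)
  have he : f x₀ - x ∉ LinearMap.range (fderiv ℝ f x₀ : EuclideanSpace ℝ (Fin m) →ₗ[ℝ] _) :=
    fun h => hx ⟨x - f x₀, neg_sub (f x₀) x ▸ neg_mem h, add_sub_cancel _ _⟩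
  obtain ⟨K, s, hs, hK⟩ := hC1x₀.exists_mem_nhds_antilipschitzWith_radialProjection hD he
  obtain ⟨M, t, ht, hM⟩ := hC1x₀.exists_lipschitzOnWith
  obtain ⟨δ, hδ, hδst⟩ :=
    (hemb.isInducing.basis_nhds nhds_basis_ball).mem_iff.1 (Filter.inter_mem hs ht)
  refine ⟨δ, hδ, (M * K + 1)⁻¹, by positivity, ?_⟩
  rintro _ ⟨⟨a, rfl⟩, ha⟩ _ ⟨⟨b, rfl⟩, hb⟩
  obtain ⟨has, hat⟩ := hδst ha
  obtain ⟨hbs, hbt⟩ := hδst hb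
  have hlip : ‖f a - f b‖ ≤ M * K * angle (f a - x) (f b - x) := calc
    ‖f a - f b‖ ≤ M * dist a b := hM.dist_le_mul a hat b hbt
    _ ≤ M * (K * dist (‖f a - x‖⁻¹ • (f a - x)) (‖f b - x‖⁻¹ • (f b - x))) := by
      gcongr; exact hK.le_mul_dist ⟨a, has⟩ ⟨b, hbs⟩
    _ ≤ M * (K * angle (f a - x) (f b - x)) := by
      gcongr; exact (dist_eq_norm _ _).trans_le (norm_inv_smul_sub_inv_smul_le_angle _ _)
    _ = M * K * angle (f a - x) (f b - x) := by ring
  rw [inv_mul_le_iff₀ (by positivity)]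
  nlinarith [angle_nonneg (f a - x) (f b - x)]

/-- If `f : ℝᵐ → ℝⁿ` is a `C¹` embedding whose derivative at `x₀` has rank `m`, and `x` lies
outside the affine tangent plane `T = f(x₀) + f'(x₀)ℝᵐ`, then there are `δ, c > 0` such that
the angle at `x` subtended by `y, z ∈ f(ℝᵐ) ∩ B(f(x₀), δ)` is at least `c‖y − z‖`. -/
theorem stmt4 {n m : ℕ} (hm : 0 < m) (hmn : m < n)
    (f : EuclideanSpace ℝ (Fin m) → EuclideanSpace ℝ (Fin n)) (hf : IsC1Embedding f)
    (x₀ : EuclideanSpace ℝ (Fin m))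
    (hrank : Module.finrank ℝ (LinearMap.range (fderiv ℝ f x₀ : EuclideanSpace ℝ (Fin m) →ₗ[ℝ] EuclideanSpace ℝ (Fin n))) = m)
    (x : EuclideanSpace ℝ (Fin n))
    (hx : x ∉ (fun w => f x₀ + w) ''
      ((LinearMap.range (fderiv ℝ f x₀ : EuclideanSpace ℝ (Fin m) →ₗ[ℝ] EuclideanSpace ℝ (Fin n)) : Submodule ℝ (EuclideanSpace ℝ (Fin n))) :
        Set (EuclideanSpace ℝ (Fin n)))) :
    ∃ δ > (0 : ℝ), ∃ c > (0 : ℝ),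
      ∀ y ∈ Set.range f ∩ ball (f x₀) δ, ∀ z ∈ Set.range f ∩ ball (f x₀) δ,
        c * ‖y - z‖ ≤ InnerProductGeometry.angle (y - x) (z - x) :=
  stmt4_general f hf x₀ hrank x hx
end
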